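/- arXiv:1704.05198 — 2 statements merged into one kernel-verified Lean document; each statement's English description precedes it below -/
import Mathlib

section
/- For every n ≥ 1 there exists a constant C = C(n) > 0 such that for every θ with 0 < θ ≤ 1/2 and every real n×n matrix A with det A ≥ θ, one has (θ/C) (1/|A^{−1}|) |1 − 1/det A| ≤ dist(A, SL(n)) ≤ C (1/|A^{−1}|) |1 − 1/det A|, where |·| is the Frobenius norm. -/
/-!
Write `d = det A` and `μ = |A⁻¹|`. For the upper bound, changing the entry `(l, k)` of `A` by `t`
changes the determinant by `t · adj(A)_{kl} = t d (A⁻¹)_{kl}`; choosing `(k, l)` with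
`|(A⁻¹)_{kl}| ≥ μ / n` reaches `SL(n)` at cost `|t| = |1 - 1/d| / |(A⁻¹)_{kl}| ≤ n |1 - 1/d| / μ`.
For the lower bound, write `B ∈ SL(n)` as `A (1 + P)` with `P = A⁻¹ (B - A)`, so `|P| ≤ μ |A - B|`
and `det (1 + P) = 1/d`. The determinant is multilinear in the rows, hence Lipschitz near `1`, which
gives `|1 - 1/d| ≤ K μ |A - B|` as long as `μ |A - B| ≤ 1`. Otherwise `|A - B| > 1/μ`, and
`θ |1 - 1/d| ≤ 1` because `d ≥ θ`.
-/

open Matrix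

noncomputable section

/-- Frobenius norm of a real square matrix. -/
def frob {ι : Type*} [Fintype ι] (A : Matrix ι ι ℝ) : ℝ :=
  Real.sqrt (∑ i, ∑ j, (A i j) ^ 2)

/-- Frobenius distance from a matrix to `SL(n)`. -/
def distSL {n : ℕ} (A : Matrix (Fin n) (Fin n) ℝ) : ℝ :=
  sInf {r : ℝ | ∃ B : Matrix (Fin n) (Fin n) ℝ, B.det = 1 ∧ r = frob (A - B)}

attribute [local instance] Matrix.frobeniusNormedAddCommGroup

theorem frob_eq_norm {ι : Type*} [Fintype ι] (A : Matrix ι ι ℝ) : frob A = ‖A‖ := by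
  rw [frobenius_norm_def, frob, Real.sqrt_eq_rpow]
  simp only [Real.norm_eq_abs, Real.rpow_two, sq_abs]

theorem abs_one_sub_inv_le_inv {θ d : ℝ} (hθ0 : 0 < θ) (hθ1 : θ ≤ 1) (hθd : θ ≤ d) :
    |1 - d⁻¹| ≤ θ⁻¹ := by
  have hd : 0 < d⁻¹ := inv_pos.2 (hθ0.trans_le hθd)
  have hdθ : d⁻¹ ≤ θ⁻¹ := inv_anti₀ hθ0 hθd
  have hθ : 1 ≤ θ⁻¹ := one_le_inv₀ hθ0 |>.2 hθ1
  rw [abs_sub_le_iff]; constructor <;> linarith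

namespace Matrix

variable {ι : Type*} [Fintype ι]

theorem norm_apply_le_frobenius_norm {m n α : Type*} [Fintype m] [Fintype n]
    [NormedAddCommGroup α] (M : Matrix m n α) (i : m) (j : n) : ‖M i j‖ ≤ ‖M‖ :=
  (PiLp.norm_apply_le (WithLp.toLp 2 fun j => M i j) j).trans
    (PiLp.norm_apply_le (WithLp.toLp 2 fun i => WithLp.toLp 2 fun j => M i j) i)

theorem norm_of_symm_le_frobenius_norm {m n α : Type*} [Fintype m] [Fintype n]
    [NormedAddCommGroup α] (M : Matrix m n α) : ‖of.symm M‖ ≤ ‖M‖ :=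
  (pi_norm_le_iff_of_nonneg (norm_nonneg M)).2 fun i =>
    (pi_norm_le_iff_of_nonneg (norm_nonneg M)).2 fun j => norm_apply_le_frobenius_norm M i j

theorem exists_frobenius_norm_le_card_mul_abs_apply [Nonempty ι] (M : Matrix ι ι ℝ) :
    ∃ k l, ‖M‖ ≤ Fintype.card ι * |M k l| := by
  obtain ⟨⟨k, l⟩, -, hmax⟩ :=
    Finset.exists_max_image Finset.univ (fun p : ι × ι => |M p.1 p.2|) Finset.univ_nonempty
  refine ⟨k, l, ?_⟩
  rw [← frob_eq_norm, frob, Real.sqrt_le_left (by positivity)]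
  calc ∑ i, ∑ j, M i j ^ 2 ≤ ∑ _i : ι, ∑ _j : ι, |M k l| ^ 2 := by
        refine Finset.sum_le_sum fun i _ => Finset.sum_le_sum fun j _ => ?_
        exact sq_le_sq.2 (by rw [abs_abs]; exact hmax (i, j) (Finset.mem_univ _))
    _ = (Fintype.card ι * |M k l|) ^ 2 := by simp [mul_pow]; ring

variable [DecidableEq ι]

theorem frobenius_norm_single (l k : ι) (t : ℝ) : ‖(single l k t : Matrix ι ι ℝ)‖ = |t| := by
  rw [← frob_eq_norm, frob]
  simp [single_apply, ite_pow, ite_and, Real.sqrt_sq_eq_abs]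

theorem det_add_single {R : Type*} [CommRing R] (A : Matrix ι ι R) (l k : ι) (t : R) :
    (A + single l k t).det = A.det + t * adjugate A k l := by
  have hrow : A + single l k t = updateRow A l (A l + t • Pi.single k 1) := by
    ext i j
    rcases eq_or_ne i l with rfl | hi
    · simp [single_apply, Pi.single_apply, eq_comm]
    · simp [hi, Ne.symm hi]
  rw [hrow, det_updateRow_add, det_updateRow_smul, updateRow_eq_self, adjugate_apply]

theorem adjugate_apply_eq_det_mul_inv_apply {K : Type*} [Field K] {A : Matrix ι ι K}
    (hA : A.det ≠ 0) (k l : ι) :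
    adjugate A k l = A.det * A⁻¹ k l := by
  rw [inv_def, smul_apply, Ring.inverse_eq_inv', smul_eq_mul, mul_inv_cancel_left₀ hA]

theorem nonsing_inv_ne_zero {K : Type*} [Field K] [Nonempty ι] {A : Matrix ι ι K}
    (hA : A.det ≠ 0) : A⁻¹ ≠ 0 :=
  fun h => by simpa [h] using nonsing_inv_mul A hA.isUnit

def detRowContinuousMultilinear : ContinuousMultilinearMap ℝ (fun _ : ι => ι → ℝ) ℝ :=
  ⟨(detRowAlternating (n := ι) (R := ℝ)).toMultilinearMap, continuous_id.matrix_det⟩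

theorem exists_abs_det_one_add_sub_one_le :
    ∃ K, 0 ≤ K ∧ ∀ P : Matrix ι ι ℝ, ‖P‖ ≤ 1 → |(1 + P).det - 1| ≤ K * ‖P‖ := by
  -- `of.symm` views a matrix as its family of rows, normed by the sup norm.
  set f := detRowContinuousMultilinear (ι := ι)
  refine ⟨‖f‖ * Fintype.card ι * 2 ^ (Fintype.card ι - 1), by positivity, fun P hP => ?_⟩
  have hone : ‖of.symm (1 : Matrix ι ι ℝ)‖ ≤ 1 :=
    (pi_norm_le_iff_of_nonneg zero_le_one).2 fun i =>
      (pi_norm_le_iff_of_nonneg zero_le_one).2 fun j => by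
        by_cases h : i = j <;> simp [h]
  have hP' : ‖of.symm P‖ ≤ ‖P‖ := norm_of_symm_le_frobenius_norm P
  have hmax : max ‖of.symm (1 + P)‖ ‖of.symm (1 : Matrix ι ι ℝ)‖ ≤ 2 := by
    refine max_le ?_ (by linarith)
    calc ‖of.symm (1 + P)‖ ≤ ‖of.symm 1‖ + ‖of.symm P‖ := norm_add_le _ _
      _ ≤ 2 := by linarith
  have hdiff : of.symm (1 + P) - of.symm 1 = of.symm P := add_sub_cancel_left _ _
  calc |(1 + P).det - 1| = ‖f (of.symm (1 + P)) - f (of.symm 1)‖ := by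
        rw [Real.norm_eq_abs, ← det_one (n := ι) (R := ℝ)]; rfl
    _ ≤ ‖f‖ * Fintype.card ι * max ‖of.symm (1 + P)‖ ‖of.symm 1‖ ^ (Fintype.card ι - 1) *
          ‖of.symm (1 + P) - of.symm 1‖ := f.norm_image_sub_le _ _
    _ ≤ ‖f‖ * Fintype.card ι * 2 ^ (Fintype.card ι - 1) * ‖P‖ := by
        rw [hdiff]; gcongr

theorem exists_det_eq_one_frobenius_norm_sub_le (A : Matrix ι ι ℝ) (hA : A.det ≠ 0) :
    ∃ B : Matrix ι ι ℝ, B.det = 1 ∧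
      ‖A - B‖ ≤ Fintype.card ι * (‖A⁻¹‖⁻¹ * |1 - A.det⁻¹|) := by
  cases isEmpty_or_nonempty ι with
  | inl _ => exact ⟨A, det_isEmpty, by simp⟩
  | inr _ =>
  obtain ⟨k, l, hkl⟩ := exists_frobenius_norm_le_card_mul_abs_apply A⁻¹
  have hinv : 0 < ‖A⁻¹‖ := norm_pos_iff.2 (nonsing_inv_ne_zero hA)
  have hkl_pos : 0 < |A⁻¹ k l| := by
    by_contra! h
    rw [abs_nonpos_iff.1 h, abs_zero, mul_zero] at hkl
    linarith
  refine ⟨A + single l k ((A.det⁻¹ - 1) / A⁻¹ k l), ?_, ?_⟩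
  · rw [det_add_single, adjugate_apply_eq_det_mul_inv_apply hA]
    field_simp [abs_pos.1 hkl_pos]
    ring
  · rw [sub_add_cancel_left, norm_neg, frobenius_norm_single, abs_div, abs_sub_comm]
    calc |1 - A.det⁻¹| / |A⁻¹ k l| = ‖A⁻¹‖ / |A⁻¹ k l| * (‖A⁻¹‖⁻¹ * |1 - A.det⁻¹|) := by
          field_simp
      _ ≤ Fintype.card ι * (‖A⁻¹‖⁻¹ * |1 - A.det⁻¹|) := by
          gcongr
          exact (div_le_iff₀ hkl_pos).2 hkl

theorem inv_norm_inv_mul_abs_le_of_det_eq_one {K : ℝ} (hK0 : 0 ≤ K)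
    (hK : ∀ P : Matrix ι ι ℝ, ‖P‖ ≤ 1 → |(1 + P).det - 1| ≤ K * ‖P‖)
    {A B : Matrix ι ι ℝ} (hA : A.det ≠ 0) (hB : B.det = 1) (hAB : ‖A⁻¹‖ * ‖A - B‖ ≤ 1) :
    ‖A⁻¹‖⁻¹ * |1 - A.det⁻¹| ≤ K * ‖A - B‖ := by
  set P := A⁻¹ * (B - A)
  have hP : ‖P‖ ≤ ‖A⁻¹‖ * ‖A - B‖ := by
    rw [norm_sub_rev]; exact frobenius_norm_mul _ _
  have hdetP : (1 + P).det = A.det⁻¹ := by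
    have hfac : A * (1 + P) = B := by
      simp only [P, mul_add, ← mul_assoc, mul_nonsing_inv A hA.isUnit, mul_one, one_mul,
        add_sub_cancel]
    refine (inv_eq_of_mul_eq_one_right ?_).symm
    rw [← det_mul, hfac, hB]
  have hkey : |1 - A.det⁻¹| ≤ K * (‖A⁻¹‖ * ‖A - B‖) := by
    rw [abs_sub_comm, ← hdetP]
    exact (hK P (hP.trans hAB)).trans (by gcongr)
  rcases eq_or_ne ‖A⁻¹‖ 0 with h0 | h0
  · rw [h0, _root_.inv_zero, zero_mul]; positivity
  · rw [inv_mul_le_iff₀ ((norm_nonneg _).lt_of_ne' h0)]; linarith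

theorem mul_inv_norm_inv_mul_abs_le_of_det_eq_one {K θ : ℝ} (hK0 : 0 ≤ K)
    (hK : ∀ P : Matrix ι ι ℝ, ‖P‖ ≤ 1 → |(1 + P).det - 1| ≤ K * ‖P‖)
    (hθ0 : 0 < θ) (hθ1 : θ ≤ 1) {A B : Matrix ι ι ℝ} (hA : θ ≤ A.det) (hB : B.det = 1) :
    θ * (‖A⁻¹‖⁻¹ * |1 - A.det⁻¹|) ≤ max K 1 * ‖A - B‖ := by
  rcases le_or_gt (‖A⁻¹‖ * ‖A - B‖) 1 with hnear | hfar
  · calc θ * (‖A⁻¹‖⁻¹ * |1 - A.det⁻¹|) ≤ ‖A⁻¹‖⁻¹ * |1 - A.det⁻¹| :=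
          mul_le_of_le_one_left (by positivity) hθ1
      _ ≤ K * ‖A - B‖ :=
          inv_norm_inv_mul_abs_le_of_det_eq_one hK0 hK (hθ0.trans_le hA).ne' hB hnear
      _ ≤ max K 1 * ‖A - B‖ := by gcongr; exact le_max_left _ _
  · have hpos : 0 < ‖A⁻¹‖ := (norm_nonneg _).lt_of_ne fun h => by
      rw [← h, zero_mul] at hfar; linarith
    have hθ : θ * |1 - A.det⁻¹| ≤ 1 := by
      calc θ * |1 - A.det⁻¹| ≤ θ * θ⁻¹ := by gcongr; exact abs_one_sub_inv_le_inv hθ0 hθ1 hA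
        _ = 1 := mul_inv_cancel₀ hθ0.ne'
    calc θ * (‖A⁻¹‖⁻¹ * |1 - A.det⁻¹|) = ‖A⁻¹‖⁻¹ * (θ * |1 - A.det⁻¹|) := by ring
      _ ≤ ‖A⁻¹‖⁻¹ := mul_le_of_le_one_right (by positivity) hθ
      _ ≤ ‖A - B‖ := ((inv_lt_iff_one_lt_mul₀' hpos).2 hfar).le
      _ ≤ max K 1 * ‖A - B‖ := le_mul_of_one_le_left (norm_nonneg _) (le_max_right _ _)

end Matrix

theorem distSL_le {n : ℕ} {A B : Matrix (Fin n) (Fin n) ℝ} (hB : B.det = 1) :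
    distSL A ≤ ‖A - B‖ :=
  csInf_le ⟨0, by rintro _ ⟨B, -, rfl⟩; exact Real.sqrt_nonneg _⟩ ⟨B, hB, (frob_eq_norm _).symm⟩

theorem le_distSL {n : ℕ} {A : Matrix (Fin n) (Fin n) ℝ} {r : ℝ}
    (h : ∀ B : Matrix (Fin n) (Fin n) ℝ, B.det = 1 → r ≤ ‖A - B‖) : r ≤ distSL A :=
  le_csInf ⟨_, 1, det_one, rfl⟩ fun _ ⟨B, hB, hr⟩ => hr ▸ (frob_eq_norm (A - B)).symm ▸ h B hB

theorem stmt_10_general (n : ℕ) :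
    ∃ C : ℝ, 0 < C ∧
      ∀ θ : ℝ, 0 < θ → θ ≤ 1 / 2 →
        ∀ A : Matrix (Fin n) (Fin n) ℝ, θ ≤ A.det →
          (θ / C) * ((frob A⁻¹)⁻¹ * |1 - (A.det)⁻¹|) ≤ distSL A ∧
          distSL A ≤ C * ((frob A⁻¹)⁻¹ * |1 - (A.det)⁻¹|) := by
  obtain ⟨K, hK0, hK⟩ := exists_abs_det_one_add_sub_one_le (ι := Fin n)
  refine ⟨max K 1 + n, by positivity, fun θ hθ0 hθ A hA => ?_⟩
  have hC : max K 1 ≤ max K 1 + n := le_add_of_nonneg_right n.cast_nonneg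
  rw [frob_eq_norm]
  constructor
  · refine le_distSL fun B hB => ?_
    rw [div_mul_eq_mul_div, div_le_iff₀ (by positivity)]
    calc θ * (‖A⁻¹‖⁻¹ * |1 - A.det⁻¹|) ≤ max K 1 * ‖A - B‖ :=
          mul_inv_norm_inv_mul_abs_le_of_det_eq_one hK0 hK hθ0 (by linarith) hA hB
      _ ≤ ‖A - B‖ * (max K 1 + n) := by rw [mul_comm]; gcongr
  · obtain ⟨B, hB, hAB⟩ := exists_det_eq_one_frobenius_norm_sub_le A (hθ0.trans_le hA).ne'
    calc distSL A ≤ ‖A - B‖ := distSL_le hB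
      _ ≤ n * (‖A⁻¹‖⁻¹ * |1 - A.det⁻¹|) := by simpa using hAB
      _ ≤ (max K 1 + n) * (‖A⁻¹‖⁻¹ * |1 - A.det⁻¹|) := by
          gcongr; exact le_add_of_nonneg_left (by positivity)

theorem stmt_10 (n : ℕ) (hn : 1 ≤ n) :
    ∃ C : ℝ, 0 < C ∧
      ∀ θ : ℝ, 0 < θ → θ ≤ 1 / 2 →
        ∀ A : Matrix (Fin n) (Fin n) ℝ, θ ≤ A.det →
          (θ / C) * ((frob A⁻¹)⁻¹ * |1 - (A.det)⁻¹|) ≤ distSL A ∧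
          distSL A ≤ C * ((frob A⁻¹)⁻¹ * |1 - (A.det)⁻¹|) :=
  stmt_10_general n


end
end

section
/- Let n ≥ 1 and 0 < λ ≤ Λ. For every real 2n×2n matrix A with λ ≤ det A ≤ Λ, one has |1 − det A| ≤ (2n)^{8n} (1 + Λ)^{2n−1} |Aᵀ J A − J|, where |·| is the Frobenius norm. -/
/-!
Since `det (Aᵀ J A) = (det A)² det J` and `|det J| = 1`, the quantity `|(det A)² - 1|` equals
`|det (Aᵀ J A) - det J|`. When `|Aᵀ J A - J| ≤ 1`, all entries of both matrices are bounded by `2`,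
and on such matrices the Leibniz formula makes the determinant Lipschitz for the entrywise
sup distance, which is dominated by the Frobenius norm. Finally `|1 - d| ≤ |d² - 1|` for `d ≥ 0`.
When `|Aᵀ J A - J| > 1` the claim is immediate from `|1 - det A| ≤ 1 + Λ`.
-/

open Matrix

noncomputable section

open Finset in
theorem abs_prod_sub_prod_le {ι R : Type*} [CommRing R] [LinearOrder R] [IsStrictOrderedRing R]
    (s : Finset ι) {a b : ι → R} {C ε : R} (hC : 1 ≤ C)
    (ha : ∀ i ∈ s, |a i| ≤ C) (hb : ∀ i ∈ s, |b i| ≤ C) (hab : ∀ i ∈ s, |a i - b i| ≤ ε) :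
    |∏ i ∈ s, a i - ∏ i ∈ s, b i| ≤ #s * C ^ #s * ε := by
  induction s using Finset.cons_induction with
  | empty => simp
  | cons x t _ ih =>
    simp only [forall_mem_cons] at ha hb hab
    have hε : 0 ≤ ε := (abs_nonneg _).trans hab.1
    have hP : |∏ i ∈ t, a i| ≤ C ^ #t := by
      rw [abs_prod, ← prod_const]
      exact prod_le_prod (fun i _ => abs_nonneg _) ha.2
    have hIH := ih ha.2 hb.2 hab.2
    rw [prod_cons, prod_cons, card_cons]
    calc |a x * ∏ i ∈ t, a i - b x * ∏ i ∈ t, b i|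
        = |(a x - b x) * ∏ i ∈ t, a i + b x * (∏ i ∈ t, a i - ∏ i ∈ t, b i)| := by ring_nf
      _ ≤ ε * C ^ #t + C * (#t * C ^ #t * ε) := by
        refine (abs_add_le _ _).trans ?_
        rw [abs_mul, abs_mul]
        gcongr
        · exact hab.1
        · exact hb.1
      _ ≤ ε * C ^ (#t + 1) + C * (#t * C ^ #t * ε) := by
        gcongr ε * ?_ + _
        exact pow_le_pow_right₀ hC (Nat.le_succ _)
      _ = ↑(#t + 1) * C ^ (#t + 1) * ε := by push_cast; ring

theorem abs_det_sub_det_le {n R : Type*} [Fintype n] [DecidableEq n] [CommRing R] [LinearOrder R]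
    [IsStrictOrderedRing R] (M N : Matrix n n R) {C ε : R} (hC : 1 ≤ C)
    (hM : ∀ i j, |M i j| ≤ C) (hN : ∀ i j, |N i j| ≤ C) (hMN : ∀ i j, |M i j - N i j| ≤ ε) :
    |M.det - N.det| ≤ (Fintype.card n).factorial * (Fintype.card n * C ^ Fintype.card n * ε) := by
  rw [det_apply, det_apply, ← Finset.sum_sub_distrib]
  calc _ ≤ ∑ σ : Equiv.Perm n, |∏ i, M (σ i) i - ∏ i, N (σ i) i| := by
        refine (Finset.abs_sum_le_sum_abs _ _).trans (le_of_eq (Finset.sum_congr rfl fun σ _ => ?_))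
        rw [← smul_sub, ← AbsoluteValue.abs_apply, AbsoluteValue.map_units_int_smul]
        rfl
    _ ≤ ∑ _σ : Equiv.Perm n, (Fintype.card n * C ^ Fintype.card n * ε) := by
        gcongr with σ
        simpa using abs_prod_sub_prod_le Finset.univ hC (fun i _ => hM (σ i) i)
          (fun i _ => hN (σ i) i) (fun i _ => hMN (σ i) i)
    _ = _ := by simp [Fintype.card_perm]

theorem frob_nonneg {ι : Type*} [Fintype ι] (A : Matrix ι ι ℝ) : 0 ≤ frob A :=
  Real.sqrt_nonneg _

theorem abs_apply_le_frob {ι : Type*} [Fintype ι] (A : Matrix ι ι ℝ) (i j : ι) :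
    |A i j| ≤ frob A := by
  rw [← Real.sqrt_sq_eq_abs]
  apply Real.sqrt_le_sqrt
  calc A i j ^ 2 ≤ ∑ k, A i k ^ 2 :=
        Finset.single_le_sum (fun k _ => sq_nonneg (A i k)) (Finset.mem_univ j)
    _ ≤ ∑ l, ∑ k, A l k ^ 2 :=
        Finset.single_le_sum (f := fun l => ∑ k, A l k ^ 2)
          (fun l _ => Finset.sum_nonneg fun k _ => sq_nonneg _) (Finset.mem_univ i)

theorem abs_J_apply_le_one (l : Type*) [DecidableEq l] (i j : l ⊕ l) : |J l ℝ i j| ≤ 1 := by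
  rcases i with i | i <;> rcases j with j | j <;>
    simp [J, one_apply, apply_ite] <;> split_ifs <;> norm_num

theorem abs_det_J (l : Type*) [Fintype l] [DecidableEq l] : |(J l ℝ).det| = 1 := by
  rw [← pow_eq_one_iff_of_nonneg (abs_nonneg _) two_ne_zero, sq_abs, sq, J_det_mul_J_det]

theorem abs_one_sub_le_abs_sq_sub_one {R : Type*} [CommRing R] [LinearOrder R]
    [IsStrictOrderedRing R] {x : R} (hx : 0 ≤ x) : |1 - x| ≤ |x ^ 2 - 1| := by
  rw [abs_sub_comm, show x ^ 2 - 1 = (x - 1) * (x + 1) by ring, abs_mul,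
    abs_of_pos (by linarith : 0 < x + 1)]
  exact le_mul_of_one_le_right (abs_nonneg _) (by linarith)

theorem abs_sq_det_sub_one_le {l : Type*} [Fintype l] [DecidableEq l]
    (A : Matrix (l ⊕ l) (l ⊕ l) ℝ) (hA : frob (Aᵀ * J l ℝ * A - J l ℝ) ≤ 1) :
    |A.det ^ 2 - 1| ≤ (2 * Fintype.card l).factorial *
      (2 * Fintype.card l * 2 ^ (2 * Fintype.card l) * frob (Aᵀ * J l ℝ * A - J l ℝ)) := by
  set E := Aᵀ * J l ℝ * A - J l ℝ
  have hE (i j) : |(Aᵀ * J l ℝ * A) i j - J l ℝ i j| ≤ frob E := abs_apply_le_frob E i j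
  have hJ (i j) : |J l ℝ i j| ≤ 2 := (abs_J_apply_le_one l i j).trans one_le_two
  have hM (i j) : |(Aᵀ * J l ℝ * A) i j| ≤ 2 := by
    have := abs_sub_abs_le_abs_sub ((Aᵀ * J l ℝ * A) i j) (J l ℝ i j)
    linarith [hE i j, abs_J_apply_le_one l i j]
  have key := abs_det_sub_det_le _ _ one_le_two hM hJ hE
  rw [Fintype.card_sum, ← two_mul, det_mul, det_mul, det_transpose,
    show A.det * (J l ℝ).det * A.det - (J l ℝ).det = (J l ℝ).det * (A.det ^ 2 - 1) by ring,
    abs_mul, abs_det_J, one_mul] at key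
  push_cast at key
  exact key

theorem Nat.factorial_mul_mul_two_pow_le {m : ℕ} (hm : 2 ≤ m) :
    m.factorial * (m * 2 ^ m) ≤ m ^ (3 * m) :=
  calc m.factorial * (m * 2 ^ m) ≤ m ^ m * (m ^ m * m ^ m) := by
        gcongr
        · exact m.factorial_le_pow
        · exact Nat.le_self_pow (by omega) m
    _ = m ^ (3 * m) := by ring

theorem stmt_16_general (n : ℕ) (hn : 1 ≤ n) (lam Lam : ℝ) (hlam : 0 < lam)
    (A : Matrix (Fin n ⊕ Fin n) (Fin n ⊕ Fin n) ℝ)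
    (h1 : lam ≤ A.det) (h2 : A.det ≤ Lam) :
    |1 - A.det| ≤ (2 * (n : ℝ)) ^ (8 * n) * (1 + Lam) ^ (2 * n - 1) *
      frob (Aᵀ * Matrix.J (Fin n) ℝ * A - Matrix.J (Fin n) ℝ) := by
  set f := frob (Aᵀ * Matrix.J (Fin n) ℝ * A - Matrix.J (Fin n) ℝ)
  have hdet : 0 ≤ A.det := hlam.le.trans h1
  have hK : 1 ≤ (2 * (n : ℝ)) ^ (8 * n) := one_le_pow₀ (by norm_cast; omega)
  have hLam : 1 ≤ 1 + Lam := by linarith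
  have hL : 1 + Lam ≤ (1 + Lam) ^ (2 * n - 1) := le_self_pow₀ hLam (by omega)
  rcases le_or_gt f 1 with hf | hf
  · have hconst : ((2 * n).factorial * (2 * n * 2 ^ (2 * n)) : ℝ) ≤ (2 * (n : ℝ)) ^ (8 * n) := by
      calc ((2 * n).factorial * (2 * n * 2 ^ (2 * n)) : ℝ) ≤ (2 * (n : ℝ)) ^ (3 * (2 * n)) := by
            exact_mod_cast Nat.factorial_mul_mul_two_pow_le (by omega : 2 ≤ 2 * n)
        _ ≤ (2 * (n : ℝ)) ^ (8 * n) := pow_le_pow_right₀ (by norm_cast; omega) (by omega)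
    calc |1 - A.det| ≤ |A.det ^ 2 - 1| := abs_one_sub_le_abs_sq_sub_one hdet
      _ ≤ (2 * n).factorial * (2 * n * 2 ^ (2 * n) * f) := by
        simpa using abs_sq_det_sub_one_le A hf
      _ ≤ (2 * (n : ℝ)) ^ (8 * n) * f := by
        rw [← mul_assoc]; gcongr; exact frob_nonneg _
      _ ≤ _ := mul_le_mul_of_nonneg_right
        (le_mul_of_one_le_right (by positivity) (hLam.trans hL)) (frob_nonneg _)
  · calc |1 - A.det| ≤ 1 * (1 + Lam) ^ (2 * n - 1) * 1 := by
          rw [one_mul, mul_one, abs_le]; constructor <;> linarith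
      _ ≤ _ := by
        have := hLam.trans hL
        gcongr

theorem stmt_16 (n : ℕ) (hn : 1 ≤ n) (lam Lam : ℝ) (hlam : 0 < lam) (hlL : lam ≤ Lam)
    (A : Matrix (Fin n ⊕ Fin n) (Fin n ⊕ Fin n) ℝ)
    (h1 : lam ≤ A.det) (h2 : A.det ≤ Lam) :
    |1 - A.det| ≤ (2 * (n : ℝ)) ^ (8 * n) * (1 + Lam) ^ (2 * n - 1) *
      frob (Aᵀ * Matrix.J (Fin n) ℝ * A - Matrix.J (Fin n) ℝ) :=
  stmt_16_general n hn lam Lam hlam A h1 h2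

end
end
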